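/- arXiv:1807.00643 — 4 statements merged into one kernel-verified Lean document; each statement's English description precedes it below -/
import Mathlib

section
/- If θ is a variable symmetry of a graphical model G (i.e., a permutation of the variables whose action on G returns G), then for every state s, the probability of s equals the probability of θ(s) under the distribution defined by G. -/
open scoped BigOperators

/-- The Gibbs distribution defined by a graphical model with weights `w` and features `f`
over a finite state space `S`. -/
noncomputable def gibbs {S J : Type} [Fintype S] [Fintype J]
    (w : J → ℝ) (f : J → S → ℝ) (s : S) : ℝ :=
  Real.exp (∑ j, w j * f j s) / ∑ t : S, Real.exp (∑ j, w j * f j t)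

/-!
The Gibbs probability of a state depends on the state only through its energy
`∑ j, w j * f j s`, and reindexing that sum by the permutation `σ` of the weighted features
turns the energy of `θ(s)` into the energy of `s`.
-/

section Energy

variable {S J : Type} [Fintype J] (w : J → ℝ) (f : J → S → ℝ)

def energy (s : S) : ℝ :=
  ∑ j, w j * f j s

theorem gibbs_eq_of_energy_eq [Fintype S] {s t : S} (h : energy w f s = energy w f t) :
    gibbs w f s = gibbs w f t := by
  unfold gibbs
  rw [show ∑ j, w j * f j s = ∑ j, w j * f j t from h]

theorem energy_map_eq_of_perm (σ : Equiv.Perm J) (g : S → S) (hw : ∀ j, w (σ j) = w j)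
    (hf : ∀ j s, f (σ j) s = f j (g s)) (s : S) :
    energy w f (g s) = energy w f s := by
  calc energy w f (g s) = ∑ j, w (σ j) * f (σ j) s := by simp only [hw, hf, energy]
    _ = energy w f s := Equiv.sum_comp σ (fun j => w j * f j s)

end Energy

/-- If `θ` is a variable symmetry of a graphical model `G` (i.e. the action of `θ` on `G`,
replacing each variable `X_i` by `θ(X_i)` in every feature, returns the same set of
weighted features, witnessed by a permutation `σ` of the features), then for every state `s`,
`P(s) = P(θ(s))`, where `θ(s) = s ∘ θ`. -/
theorem variable_symmetry_preserves_prob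
    {V D J : Type} [Fintype V] [DecidableEq V] [Fintype D] [Fintype J]
    (w : J → ℝ) (f : J → (V → D) → ℝ) (θ : Equiv.Perm V)
    (hsym : ∃ σ : Equiv.Perm J, ∀ j, w (σ j) = w j ∧ ∀ s : V → D, f (σ j) s = f j (s ∘ θ)) :
    ∀ s : V → D, gibbs w f s = gibbs w f (s ∘ θ) := by
  obtain ⟨σ, hσ⟩ := hsym
  intro s
  exact gibbs_eq_of_energy_eq w f
    (energy_map_eq_of_perm w f σ (· ∘ θ) (fun j => (hσ j).1) (fun j => (hσ j).2) s).symm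
end

section
/- If Φ is a group of VV symmetries of a graphical model G, then for all states s and all φ ∈ Φ, P(s) = P(φ(s)). -/
open scoped BigOperators

/-- A VV permutation `φ` is valid: whenever `φ(X_i,x_i) = (X_j,x_j)` then for every value
`x_i'` there is a value `x_j'` with `φ(X_i,x_i') = (X_j,x_j')`. -/
def ValidVV {V D : Type} (φ : Equiv.Perm (V × D)) : Prop :=
  ∀ (i : V) (x : D) (j : V) (y : D), φ (i, x) = (j, y) → ∀ x' : D, ∃ y' : D, φ (i, x') = (j, y')

theorem sum_mul_features_eq_of_perm {S J : Type} [Fintype J] (w : J → ℝ) (f : J → S → ℝ)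
    (σ : Equiv.Perm J) {s s' : S} (hw : ∀ j, w (σ j) = w j) (hf : ∀ j, f (σ j) s = f j s') :
    ∑ j, w j * f j s = ∑ j, w j * f j s' := by
  calc ∑ j, w j * f j s = ∑ j, w (σ j) * f (σ j) s :=
        (Equiv.sum_comp σ fun j => w j * f j s).symm
    _ = ∑ j, w j * f j s' := Finset.sum_congr rfl fun j _ => by rw [hw, hf]

theorem gibbs_eq_of_perm {S J : Type} [Fintype S] [Fintype J] (w : J → ℝ) (f : J → S → ℝ)
    (σ : Equiv.Perm J) {s s' : S} (hw : ∀ j, w (σ j) = w j) (hf : ∀ j, f (σ j) s = f j s') :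
    gibbs w f s = gibbs w f s' := by
  rw [gibbs, gibbs, sum_mul_features_eq_of_perm w f σ hw hf]

theorem vv_symmetry_preserves_prob_general
    {V D J : Type} [Fintype V] [DecidableEq V] [Fintype D] [Fintype J]
    (w : J → ℝ) (f : J → (V → D) → ℝ)
    (Φ : Subgroup (Equiv.Perm (V × D)))
    (act : Equiv.Perm (V × D) → (V → D) → (V → D))
    (hsym : ∀ φ ∈ Φ, ∃ σ : Equiv.Perm J, ∀ j, w (σ j) = w j ∧
      ∀ s : V → D, f (σ j) s = f j (act φ s)) :
    ∀ φ ∈ Φ, ∀ s : V → D, gibbs w f s = gibbs w f (act φ s) := by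
  intro φ hφ s
  obtain ⟨σ, hσ⟩ := hsym φ hφ
  exact gibbs_eq_of_perm w f σ (fun j => (hσ j).1) fun j => (hσ j).2 s

/-- If `Φ` is a group of VV symmetries of a graphical model `G` (each `φ ∈ Φ` is a valid VV
permutation, `act φ` is its action on states, i.e. `φ(X_i, s(X_i)) = (X_j, x_j)` implies
`(act φ s)(X_j) = x_j`, and the action of `φ` on `G` returns the same set of weighted
features), then for all states `s` and all `φ ∈ Φ`, `P(s) = P(φ(s))`. -/
theorem vv_symmetry_preserves_prob
    {V D J : Type} [Fintype V] [DecidableEq V] [Fintype D] [Fintype J]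
    (w : J → ℝ) (f : J → (V → D) → ℝ)
    (Φ : Subgroup (Equiv.Perm (V × D)))
    (hvalid : ∀ φ ∈ Φ, ValidVV φ)
    (act : Equiv.Perm (V × D) → (V → D) → (V → D))
    (hact : ∀ φ ∈ Φ, ∀ (s : V → D) (i : V), act φ s (φ (i, s i)).1 = (φ (i, s i)).2)
    (hsym : ∀ φ ∈ Φ, ∃ σ : Equiv.Perm J, ∀ j, w (σ j) = w j ∧
      ∀ s : V → D, f (σ j) s = f j (act φ s)) :
    ∀ φ ∈ Φ, ∀ s : V → D, gibbs w f s = gibbs w f (act φ s) :=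
  vv_symmetry_preserves_prob_general w f Φ act hsym
end

section
/- Let M be a regular (irreducible and aperiodic) Markov chain on a finite state space S with stationary distribution π, and let Ψ be a group of π-preserving permutations of S. The BV-MCMC(α) chain M', which first takes a step of M to get s', then with probability α replaces s' by a uniform sample from the orbit Γ_Ψ(s') and with probability 1−α keeps s', is regular and has stationary distribution π. -/
/-!
Write `U` for the orbit-averaging kernel, `U s t = 1/|Γ_Ψ(s)|` for `t ∈ Γ_Ψ(s)`. Then the
BV-MCMC(α) kernel is `(1 - α) T + α T U`. Since `π` is constant on orbits, `π U = π`, so `π` is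
stationary for `T U` and hence for the convex combination. Since `U t t ≥ 1/|S|`, the new kernel
dominates `T / |S|` entrywise, so a power of it is positive wherever the same power of `T` is.
-/

open scoped BigOperators

/-- The orbit `Γ_Ψ(s) = {ψ(s) : ψ ∈ Ψ}` of a state `s` under a group `Ψ` of permutations
of the finite state space `S`, as a finset. -/
noncomputable def orbitFinset {S : Type} [Fintype S] (Ψ : Subgroup (Equiv.Perm S))
    (s : S) : Finset S :=
  open scoped Classical in
  Finset.univ.filter (fun t => ∃ ψ ∈ Ψ, ψ s = t)

/-- The transition kernel of the BV-MCMC(α) chain `M'`: first take a step of `M`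
(kernel `T`) to reach `s'`, then with probability `α` move to a uniform sample from the
orbit `Γ_Ψ(s')`, and with probability `1 − α` stay at `s'`. -/
noncomputable def bvKernel {S : Type} [Fintype S] [DecidableEq S]
    (Ψ : Subgroup (Equiv.Perm S)) (α : ℝ) (T : Matrix S S ℝ) : Matrix S S ℝ :=
  fun s t => (1 - α) * T s t +
    α * ∑ s', T s s' *
      (if t ∈ orbitFinset Ψ s' then 1 / ((orbitFinset Ψ s').card : ℝ) else 0)

namespace Matrix

variable {n R : Type*} [Fintype n] [DecidableEq n] [CommRing R] [LinearOrder R]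
  [IsStrictOrderedRing R]

theorem pow_mul_pow_apply_le_pow_apply {A B : Matrix n n R} {c : R} (hc : 0 ≤ c)
    (hB : ∀ i j, 0 ≤ B i j) (hBA : ∀ i j, c * B i j ≤ A i j) (k : ℕ) (i j : n) :
    c ^ k * (B ^ k) i j ≤ (A ^ k) i j := by
  induction k generalizing j with
  | zero => simp
  | succ k ih =>
    simp only [pow_succ, mul_apply, Finset.mul_sum]
    refine Finset.sum_le_sum fun l _ => ?_
    calc c ^ k * c * ((B ^ k) i l * B l j) = (c ^ k * (B ^ k) i l) * (c * B l j) := by ring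
      _ ≤ (A ^ k) i l * A l j :=
        mul_le_mul (ih l) (hBA l j) (mul_nonneg hc (hB l j))
          ((mul_nonneg (pow_nonneg hc k) (pow_apply_nonneg hB k i l)).trans (ih l))

theorem pow_apply_pos_of_mul_le {A B : Matrix n n R} {c : R} (hc : 0 < c)
    (hB : ∀ i j, 0 ≤ B i j) (hBA : ∀ i j, c * B i j ≤ A i j) {k : ℕ} {i j : n}
    (h : 0 < (B ^ k) i j) : 0 < (A ^ k) i j :=
  (mul_pos (pow_pos hc k) h).trans_le (pow_mul_pow_apply_le_pow_apply hc.le hB hBA k i j)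

end Matrix

section Orbit

variable {S : Type} [Fintype S] {Ψ : Subgroup (Equiv.Perm S)} {s t : S}

theorem coe_orbitFinset (Ψ : Subgroup (Equiv.Perm S)) (s : S) :
    (orbitFinset Ψ s : Set S) = MulAction.orbit Ψ s := by
  ext t
  simp [orbitFinset, MulAction.mem_orbit_iff, Subgroup.smul_def]

theorem mem_orbitFinset_self (Ψ : Subgroup (Equiv.Perm S)) (s : S) : s ∈ orbitFinset Ψ s := by
  rw [← Finset.mem_coe, coe_orbitFinset]
  exact MulAction.mem_orbit_self s

theorem mem_orbitFinset_comm : t ∈ orbitFinset Ψ s ↔ s ∈ orbitFinset Ψ t := by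
  simp only [← Finset.mem_coe, coe_orbitFinset]
  exact MulAction.mem_orbit_symm

theorem orbitFinset_eq_of_mem (h : t ∈ orbitFinset Ψ s) : orbitFinset Ψ t = orbitFinset Ψ s := by
  rw [← Finset.coe_inj, coe_orbitFinset, coe_orbitFinset]
  rw [← Finset.mem_coe, coe_orbitFinset] at h
  exact MulAction.orbit_eq_iff.mpr h

theorem apply_eq_of_mem_orbitFinset {β : Type*} {f : S → β} (hf : ∀ ψ ∈ Ψ, ∀ s, f (ψ s) = f s)
    (h : t ∈ orbitFinset Ψ s) : f t = f s := by
  classical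
  obtain ⟨ψ, hψ, rfl⟩ := (Finset.mem_filter.mp h).2
  exact hf ψ hψ s

end Orbit

section OrbitAverage

open Matrix

variable {S : Type} [Fintype S] [DecidableEq S]

noncomputable def orbitAvg (Ψ : Subgroup (Equiv.Perm S)) : Matrix S S ℝ :=
  fun s t => if t ∈ orbitFinset Ψ s then 1 / ((orbitFinset Ψ s).card : ℝ) else 0

theorem orbitAvg_nonneg (Ψ : Subgroup (Equiv.Perm S)) (s t : S) : 0 ≤ orbitAvg Ψ s t := by
  unfold orbitAvg
  split_ifs <;> positivity

theorem inv_card_le_orbitAvg_self (Ψ : Subgroup (Equiv.Perm S)) (t : S) :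
    (Fintype.card S : ℝ)⁻¹ ≤ orbitAvg Ψ t t := by
  have hpos : (0 : ℝ) < (orbitFinset Ψ t).card := by
    exact_mod_cast Finset.card_pos.mpr ⟨t, mem_orbitFinset_self Ψ t⟩
  have hle : ((orbitFinset Ψ t).card : ℝ) ≤ Fintype.card S := by
    exact_mod_cast Finset.card_le_univ _
  rw [orbitAvg, if_pos (mem_orbitFinset_self Ψ t), one_div]
  exact inv_anti₀ hpos hle

theorem vecMul_orbitAvg {Ψ : Subgroup (Equiv.Perm S)} {π : S → ℝ}
    (hΨ : ∀ ψ ∈ Ψ, ∀ s, π (ψ s) = π s) : π ᵥ* orbitAvg Ψ = π := by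
  classical
  ext t
  have hfilter : Finset.univ.filter (fun s => t ∈ orbitFinset Ψ s) = orbitFinset Ψ t := by
    ext s
    simp [mem_orbitFinset_comm (s := s)]
  have hcard : ((orbitFinset Ψ t).card : ℝ) ≠ 0 := by
    exact_mod_cast (Finset.card_pos.mpr ⟨t, mem_orbitFinset_self Ψ t⟩).ne'
  calc (π ᵥ* orbitAvg Ψ) t
      = ∑ s ∈ orbitFinset Ψ t, π s * (1 / ((orbitFinset Ψ s).card : ℝ)) := by
        simp only [vecMul, dotProduct, orbitAvg, mul_ite, mul_zero]
        rw [← Finset.sum_filter, hfilter]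
    _ = ∑ _s ∈ orbitFinset Ψ t, π t * (1 / ((orbitFinset Ψ t).card : ℝ)) := by
        refine Finset.sum_congr rfl fun s hs => ?_
        rw [apply_eq_of_mem_orbitFinset hΨ hs, orbitFinset_eq_of_mem hs]
    _ = π t := by
        rw [Finset.sum_const, nsmul_eq_mul]
        field_simp

end OrbitAverage

section BVKernel

open Matrix

variable {S : Type} [Fintype S] [DecidableEq S] (Ψ : Subgroup (Equiv.Perm S)) {α : ℝ}
  {T : Matrix S S ℝ}

theorem bvKernel_eq (α : ℝ) (T : Matrix S S ℝ) :
    bvKernel Ψ α T = (1 - α) • T + α • (T * orbitAvg Ψ) := by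
  ext s t
  rfl

theorem vecMul_bvKernel {π : S → ℝ} (hT : π ᵥ* T = π) (hΨ : ∀ ψ ∈ Ψ, ∀ s, π (ψ s) = π s) :
    π ᵥ* bvKernel Ψ α T = π := by
  rw [bvKernel_eq, vecMul_add, vecMul_smul, vecMul_smul, ← vecMul_vecMul, hT, vecMul_orbitAvg hΨ, ← add_smul, sub_add_cancel, one_smul]

theorem inv_card_mul_le_bvKernel (hT : ∀ s t, 0 ≤ T s t) (hα0 : 0 ≤ α) (hα1 : α ≤ 1)
    (s t : S) : (Fintype.card S : ℝ)⁻¹ * T s t ≤ bvKernel Ψ α T s t := by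
  set c : ℝ := (Fintype.card S : ℝ)⁻¹
  have hc1 : c ≤ 1 := inv_le_one_of_one_le₀ (by exact_mod_cast Fintype.card_pos_iff.mpr ⟨s⟩)
  have hdiag : T s t * c ≤ (T * orbitAvg Ψ) s t :=
    calc T s t * c ≤ T s t * orbitAvg Ψ t t :=
          mul_le_mul_of_nonneg_left (inv_card_le_orbitAvg_self Ψ t) (hT s t)
      _ ≤ ∑ j, T s j * orbitAvg Ψ j t :=
          Finset.single_le_sum (f := fun j => T s j * orbitAvg Ψ j t)
            (fun j _ => mul_nonneg (hT s j) (orbitAvg_nonneg Ψ j t)) (Finset.mem_univ t)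
  rw [bvKernel_eq]
  simp only [Matrix.add_apply, Matrix.smul_apply, smul_eq_mul]
  nlinarith [mul_le_mul_of_nonneg_left hc1 (hT s t), mul_le_mul_of_nonneg_left hdiag hα0]

end BVKernel

theorem bv_mcmc_regular_and_stationary_general {S : Type} [Fintype S] [DecidableEq S]
    (T : Matrix S S ℝ) (π : S → ℝ)
    (hT0 : ∀ s t, 0 ≤ T s t)
    (hreg : ∃ n : ℕ, 0 < n ∧ ∀ s t, 0 < (T ^ n) s t)
    (hstat : ∀ t, ∑ s, π s * T s t = π t)
    (Ψ : Subgroup (Equiv.Perm S))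
    (hΨ : ∀ ψ ∈ Ψ, ∀ s, π (ψ s) = π s)
    (α : ℝ) (hα0 : 0 ≤ α) (hα1 : α ≤ 1) :
    (∃ n : ℕ, 0 < n ∧ ∀ s t, 0 < ((bvKernel Ψ α T) ^ n) s t) ∧
    ∀ t, ∑ s, π s * bvKernel Ψ α T s t = π t := by
  refine ⟨?_, congrFun (vecMul_bvKernel Ψ (funext hstat) hΨ)⟩
  obtain ⟨n, hn, hpos⟩ := hreg
  refine ⟨n, hn, fun s t => ?_⟩
  have hc : (0 : ℝ) < (Fintype.card S : ℝ)⁻¹ := by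
    have := Fintype.card_pos_iff.mpr ⟨s⟩
    positivity
  exact Matrix.pow_apply_pos_of_mul_le hc hT0 (inv_card_mul_le_bvKernel Ψ hT0 hα0 hα1) (hpos s t)

/-- Let `M` be a regular Markov chain on a finite state space `S` with stationary
distribution `π`, and let `Ψ` be a group of `π`-preserving permutations of `S`. Then for any
`α ∈ [0,1]`, the BV-MCMC(α) chain `M'` is regular and has stationary distribution `π`. -/
theorem bv_mcmc_regular_and_stationary {S : Type} [Fintype S] [DecidableEq S]
    (T : Matrix S S ℝ) (π : S → ℝ)
    (hT0 : ∀ s t, 0 ≤ T s t) (hT1 : ∀ s, ∑ t, T s t = 1)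
    (hreg : ∃ n : ℕ, 0 < n ∧ ∀ s t, 0 < (T ^ n) s t)
    (hπ0 : ∀ s, 0 ≤ π s) (hπ1 : ∑ s, π s = 1)
    (hstat : ∀ t, ∑ s, π s * T s t = π t)
    (Ψ : Subgroup (Equiv.Perm S))
    (hΨ : ∀ ψ ∈ Ψ, ∀ s, π (ψ s) = π s)
    (α : ℝ) (hα0 : 0 ≤ α) (hα1 : α ≤ 1) :
    (∃ n : ℕ, 0 < n ∧ ∀ s t, 0 < ((bvKernel Ψ α T) ^ n) s t) ∧
    ∀ t, ∑ s, π s * bvKernel Ψ α T s t = π t :=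
  bv_mcmc_regular_and_stationary_general T π hT0 hreg hstat Ψ hΨ α hα0 hα1
end

section
/- If a BV-permutation ψ on the block-value set Δ_V is valid, then its action on any state s yields a well-defined state: every variable receives exactly one value, and the induced map on states is a bijection of the state space. -/
/-!
Validity says that `ψ` moves every block as a whole: the block of `ψ (B, b)` depends only on `B`.
As `D` is nonempty this defines a map `σ` on the finite set of blocks, which is surjective because
`ψ` is, hence a permutation. So `ψ` is `Equiv.sigmaCongr σ G` for bijections
`G B` from the assignments of `B` to those of `σ B`, and the action on states is the
transport `Equiv.piCongr σ G`, an equivalence; the consistency condition determines it pointwise.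
-/

/-- A BV permutation (a permutation of the block-value set `Δ_V` of the block partition
encoded by `blk : V → L`) is valid: it maps all assignments of a block to assignments of
one fixed block. -/
def ValidBV {V D L : Type} (blk : V → L)
    (ψ : Equiv.Perm (Σ l : L, ({x : V // blk x = l} → D))) : Prop :=
  ∀ (l : L) (b : {x : V // blk x = l} → D) (l' : L) (b' : {x : V // blk x = l'} → D),
    ψ ⟨l, b⟩ = ⟨l', b'⟩ →
      ∀ b'' : {x : V // blk x = l} → D, ∃ b''' : {x : V // blk x = l'} → D,
        ψ ⟨l, b''⟩ = ⟨l', b'''⟩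

namespace Equiv

theorem sigma_mk_sigmaSubtype {α : Type*} {β : α → Type*} {a : α}
    (s : {s : Sigma β // s.1 = a}) : (⟨a, sigmaSubtype a s⟩ : Sigma β) = s := by
  obtain ⟨⟨_, b⟩, rfl⟩ := s
  rfl

theorem exists_eq_sigmaCongr {α₁ α₂ : Type*} {β₁ : α₁ → Type*} {β₂ : α₂ → Type*}
    (ψ : Sigma β₁ ≃ Sigma β₂) (e : α₁ ≃ α₂) (he : ∀ x, (ψ x).1 = e x.1) :
    ∃ G : ∀ a, β₁ a ≃ β₂ (e a), ψ = e.sigmaCongr G := by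
  refine ⟨fun a => (sigmaSubtype a).symm.trans
    ((ψ.subtypeEquiv fun x => by rw [he, e.apply_eq_iff_eq]).trans (sigmaSubtype (e a))), ?_⟩
  ext1 ⟨a, b⟩
  exact (sigma_mk_sigmaSubtype (⟨ψ ⟨a, b⟩, _⟩ : {s // s.1 = e a})).symm

theorem Perm.exists_eq_sigmaCongr_of_fst_eq {α : Type*} {β : α → Type*} [Finite α]
    [∀ a, Nonempty (β a)] (ψ : Perm (Σ a, β a))
    (hψ : ∀ a (b b' : β a), (ψ ⟨a, b⟩).1 = (ψ ⟨a, b'⟩).1) :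
    ∃ (e : Perm α) (G : ∀ a, β a ≃ β (e a)), ψ = e.sigmaCongr G := by
  let σ : α → α := fun a => (ψ ⟨a, Classical.arbitrary _⟩).1
  have hσ : ∀ x, (ψ x).1 = σ x.1 := fun ⟨a, b⟩ => hψ a b _
  have hσ_surj : σ.Surjective := fun a =>
    ⟨(ψ.symm ⟨a, Classical.arbitrary _⟩).1, by rw [← hσ, apply_symm_apply]⟩
  let e := ofBijective σ (Finite.surjective_iff_bijective.mp hσ_surj)
  exact ⟨e, ψ.exists_eq_sigmaCongr e hσ⟩

theorem eq_piCongr_iff {α₁ α₂ : Type*} {β₁ : α₁ → Type*} {β₂ : α₂ → Type*}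
    (e : α₁ ≃ α₂) (G : ∀ a, β₁ a ≃ β₂ (e a)) (A : (∀ a, β₁ a) → ∀ a, β₂ a) :
    A = e.piCongr G ↔ ∀ f a b, f a = b ↔ A f (e a) = G a b := by
  constructor
  · rintro rfl f a b
    rw [piCongr_apply_apply, (G a).apply_eq_iff_eq]
  · intro hA
    funext f a'
    obtain ⟨a, rfl⟩ := e.surjective a'
    rw [piCongr_apply_apply, ← hA]

end Equiv

theorem ValidBV.fst_eq {V D L : Type} {blk : V → L}
    {ψ : Equiv.Perm (Σ l : L, ({x : V // blk x = l} → D))} (hvalid : ValidBV blk ψ)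
    (l : L) (b b' : {x : V // blk x = l} → D) : (ψ ⟨l, b⟩).1 = (ψ ⟨l, b'⟩).1 := by
  obtain ⟨_, h⟩ := hvalid l b _ _ rfl b'
  exact (congrArg Sigma.fst h).symm

theorem valid_bv_action_welldefined_and_bijective_general
    {V D L : Type} [Fintype L] [Nonempty D]
    (blk : V → L)
    (ψ : Equiv.Perm (Σ l : L, ({x : V // blk x = l} → D)))
    (hvalid : ValidBV blk ψ) :
    ∃ A : ((l : L) → {x : V // blk x = l} → D) → ((l : L) → {x : V // blk x = l} → D),
      (∀ (sh : (l : L) → {x : V // blk x = l} → D) (l : L) (b : {x : V // blk x = l} → D),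
        (sh l = b ↔ A sh (ψ ⟨l, b⟩).1 = (ψ ⟨l, b⟩).2)) ∧
      Function.Bijective A ∧
      ∀ A' : ((l : L) → {x : V // blk x = l} → D) → ((l : L) → {x : V // blk x = l} → D),
        (∀ (sh : (l : L) → {x : V // blk x = l} → D) (l : L) (b : {x : V // blk x = l} → D),
          (sh l = b ↔ A' sh (ψ ⟨l, b⟩).1 = (ψ ⟨l, b⟩).2)) → A' = A := by
  obtain ⟨e, G, rfl⟩ := ψ.exists_eq_sigmaCongr_of_fst_eq hvalid.fst_eq
  have hA := e.eq_piCongr_iff (β₁ := fun l => {x // blk x = l} → D)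
    (β₂ := fun l => {x // blk x = l} → D) G
  exact ⟨_, (hA _).mp rfl, Equiv.bijective _, fun A' => (hA A').mpr⟩

/-- If a BV permutation `ψ` on the block-value set is valid, then its action on states is
well defined (there is a unique map `A` on transformed states such that a BV pair `(B,b)`
is consistent with `sh` iff `ψ(B,b)` is consistent with `A sh`, so every variable receives
exactly one value) and the induced map on states is a bijection of the state space. -/
theorem valid_bv_action_welldefined_and_bijective
    {V D L : Type} [Fintype V] [Fintype D] [Fintype L] [Nonempty D]
    (blk : V → L)
    (ψ : Equiv.Perm (Σ l : L, ({x : V // blk x = l} → D)))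
    (hvalid : ValidBV blk ψ) :
    ∃ A : ((l : L) → {x : V // blk x = l} → D) → ((l : L) → {x : V // blk x = l} → D),
      (∀ (sh : (l : L) → {x : V // blk x = l} → D) (l : L) (b : {x : V // blk x = l} → D),
        (sh l = b ↔ A sh (ψ ⟨l, b⟩).1 = (ψ ⟨l, b⟩).2)) ∧
      Function.Bijective A ∧
      ∀ A' : ((l : L) → {x : V // blk x = l} → D) → ((l : L) → {x : V // blk x = l} → D),
        (∀ (sh : (l : L) → {x : V // blk x = l} → D) (l : L) (b : {x : V // blk x = l} → D),
          (sh l = b ↔ A' sh (ψ ⟨l, b⟩).1 = (ψ ⟨l, b⟩).2)) → A' = A :=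
  valid_bv_action_welldefined_and_bijective_general blk ψ hvalid
end
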